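/- arXiv:math/0102098 — 2 statements merged into one kernel-verified Lean document; each statement's English description precedes it below -/
import Mathlib

section
/- In the Hecke algebra Hₙ, the Murphy operators M(2), …, M(n) commute pairwise: M(j)·M(k) = M(k)·M(j) for all 2 ≤ j, k ≤ n. -/
/-- The defining relations of the Hecke algebra `Hₙ` of type `A` over a
commutative ring `R` with invertible parameter `s` (and `z = s - s⁻¹`), imposed
on the free `R`-algebra on generators `σ₁, …, σ_{n-1}` (indexed by `Fin (n-1)`,
so the generator `σ_k` corresponds to the index `k - 1`):
far-apart commutation, the braid relations, and the quadratic relations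
`σᵢ² = z σᵢ + 1`. -/
inductive HeckeRel (R : Type*) [CommRing R] (s : Rˣ) (n : ℕ) :
    FreeAlgebra R (Fin (n - 1)) → FreeAlgebra R (Fin (n - 1)) → Prop
  | comm (i j : Fin (n - 1)) (h : (i : ℕ) + 2 ≤ (j : ℕ)) :
      HeckeRel R s n (FreeAlgebra.ι R i * FreeAlgebra.ι R j)
        (FreeAlgebra.ι R j * FreeAlgebra.ι R i)
  | braid (i j : Fin (n - 1)) (h : (j : ℕ) = (i : ℕ) + 1) :
      HeckeRel R s n (FreeAlgebra.ι R i * FreeAlgebra.ι R j * FreeAlgebra.ι R i)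
        (FreeAlgebra.ι R j * FreeAlgebra.ι R i * FreeAlgebra.ι R j)
  | quad (i : Fin (n - 1)) :
      HeckeRel R s n (FreeAlgebra.ι R i * FreeAlgebra.ι R i)
        (((s : R) - ((s⁻¹ : Rˣ) : R)) • FreeAlgebra.ι R i + 1)

/-- The Hecke algebra `Hₙ`: the quotient of the free `R`-algebra on
`σ₁, …, σ_{n-1}` by the two-sided ideal generated by the Hecke relations. -/
abbrev Hecke (R : Type*) [CommRing R] (s : Rˣ) (n : ℕ) : Type _ :=
  RingQuot (HeckeRel R s n)

variable {R : Type*} [CommRing R]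

/-- The generator `σ_{k+1}` of the Hecke algebra `Hₙ` (0-based index `k`, so
`heckeGen s n (k-1)` is the generator `σ_k` for `1 ≤ k ≤ n-1`); indices out of
range give `1`. -/
noncomputable def heckeGen (s : Rˣ) (n k : ℕ) : Hecke R s n :=
  if h : k < n - 1 then RingQuot.mkAlgHom R (HeckeRel R s n) (FreeAlgebra.ι R ⟨k, h⟩) else 1

/-- The ascending product `σ_i σ_{i+1} ⋯ σ_{j-1}` in `Hₙ` (1-based labels). -/
noncomputable def ascProd (s : Rˣ) (n i j : ℕ) : Hecke R s n :=
  ((List.range (j - i)).map (fun t => heckeGen s n (i - 1 + t))).prod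

/-- The descending product `σ_{j-1} σ_{j-2} ⋯ σ_i` in `Hₙ` (1-based labels). -/
noncomputable def descProd (s : Rˣ) (n i j : ℕ) : Hecke R s n :=
  (((List.range (j - i)).map (fun t => heckeGen s n (i - 1 + t))).reverse).prod

/-- The element `T(j) = (σ_{j-1} ⋯ σ₁)(σ₁ ⋯ σ_{j-1})` of `Hₙ`, with `T(1) = 1`. -/
noncomputable def heckeT (s : Rˣ) (n j : ℕ) : Hecke R s n :=
  descProd s n 1 j * ascProd s n 1 j

/-- The positive permutation braid element
`ω_{(i j)} = σ_{j-1} ⋯ σ_{i+1} · σᵢ · σ_{i+1} ⋯ σ_{j-1}` of `Hₙ`, for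
`1 ≤ i < j ≤ n` (for `j = i + 1` this is just `σᵢ`). -/
noncomputable def omegaBraid (s : Rˣ) (n i j : ℕ) : Hecke R s n :=
  descProd s n (i + 1) j * heckeGen s n (i - 1) * ascProd s n (i + 1) j

/-- The Murphy operator `M(j) = ∑_{i=1}^{j-1} ω_{(i j)}` in `Hₙ`. -/
noncomputable def murphyOp (s : Rˣ) (n j : ℕ) : Hecke R s n :=
  ∑ i ∈ Finset.Ico 1 j, omegaBraid s n i j

section Aux

variable (s : Rˣ) (n : ℕ)

lemma heckeGen_comm {a b : ℕ} (h : a + 2 ≤ b) :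
    Commute (heckeGen s n a) (heckeGen s n b) := by
  unfold heckeGen
  split_ifs with ha hb hb
  · show _ * _ = _ * _
    have := RingQuot.mkAlgHom_rel R
      (HeckeRel.comm (R := R) (s := s) (n := n) ⟨a, ha⟩ ⟨b, hb⟩ h)
    simpa [map_mul] using this
  · exact Commute.one_right _
  · exact Commute.one_left _
  · exact Commute.one_left _

lemma heckeGen_quad {a : ℕ} (ha : a < n - 1) :
    heckeGen s n a * heckeGen s n a
      = ((s : R) - ((s⁻¹ : Rˣ) : R)) • heckeGen s n a + 1 := by
  rw [heckeGen, dif_pos ha]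
  have := RingQuot.mkAlgHom_rel R (HeckeRel.quad (R := R) (s := s) (n := n) ⟨a, ha⟩)
  simpa [map_mul, map_add, map_smul, map_one] using this

lemma heckeGen_braid {a : ℕ} (ha : a + 1 < n - 1) :
    heckeGen s n a * heckeGen s n (a + 1) * heckeGen s n a
      = heckeGen s n (a + 1) * heckeGen s n a * heckeGen s n (a + 1) := by
  have ha' : a < n - 1 := by omega
  rw [heckeGen, heckeGen, dif_pos ha', dif_pos ha]
  have := RingQuot.mkAlgHom_rel R
    (HeckeRel.braid (R := R) (s := s) (n := n) ⟨a, ha'⟩ ⟨a + 1, ha⟩ rfl)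
  simpa [map_mul] using this

lemma murphyOp_zero' : murphyOp s n 0 = 0 := by simp [murphyOp]

lemma murphyOp_one' : murphyOp s n 1 = 0 := by simp [murphyOp]

lemma ascProd_succ {i j : ℕ} (h1 : 1 ≤ i) (h2 : i ≤ j) :
    ascProd s n i (j + 1) = ascProd s n i j * heckeGen s n (j - 1) := by
  have hj : j + 1 - i = (j - i) + 1 := by omega
  have hidx : i - 1 + (j - i) = j - 1 := by omega
  rw [ascProd, hj, List.range_succ, List.map_append, List.prod_append, ascProd]
  simp [hidx]

lemma descProd_succ {i j : ℕ} (h1 : 1 ≤ i) (h2 : i ≤ j) :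
    descProd s n i (j + 1) = heckeGen s n (j - 1) * descProd s n i j := by
  have hj : j + 1 - i = (j - i) + 1 := by omega
  have hidx : i - 1 + (j - i) = j - 1 := by omega
  rw [descProd, hj, List.range_succ, List.map_append, List.reverse_append, descProd]
  simp [hidx]

lemma omegaBraid_self (m : ℕ) : omegaBraid s n m (m + 1) = heckeGen s n (m - 1) := by
  simp [omegaBraid, descProd, ascProd, Nat.sub_self]

lemma omegaBraid_succ {i m : ℕ} (h1 : 1 ≤ i) (h2 : i + 1 ≤ m) :
    omegaBraid s n i (m + 1)
      = heckeGen s n (m - 1) * omegaBraid s n i m * heckeGen s n (m - 1) := by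
  rw [omegaBraid, omegaBraid, ascProd_succ s n (by omega) h2, descProd_succ s n (by omega) h2]
  simp [mul_assoc]

lemma murphyOp_succ {m : ℕ} (hm : 1 ≤ m) :
    murphyOp s n (m + 1)
      = heckeGen s n (m - 1) * murphyOp s n m * heckeGen s n (m - 1)
        + heckeGen s n (m - 1) := by
  rw [murphyOp, Finset.sum_Ico_succ_top hm, omegaBraid_self]
  congr 1
  rw [murphyOp, Finset.mul_sum, Finset.sum_mul]
  refine Finset.sum_congr rfl fun i hi => ?_
  rw [Finset.mem_Ico] at hi
  rw [omegaBraid_succ s n hi.1 hi.2]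

lemma commute_heckeGen_murphyOp_of_ge (t : ℕ) :
    ∀ m : ℕ, m ≤ t → Commute (heckeGen s n t) (murphyOp s n m) := by
  intro m
  induction m with
  | zero => intro _; rw [murphyOp_zero']; exact Commute.zero_right _
  | succ p ih =>
    intro h
    rcases Nat.eq_zero_or_pos p with rfl | hp
    · rw [murphyOp_one']; exact Commute.zero_right _
    · rw [murphyOp_succ s n hp]
      have hg : Commute (heckeGen s n t) (heckeGen s n (p - 1)) :=
        (heckeGen_comm s n (by omega)).symm
      exact ((hg.mul_right (ih (by omega))).mul_right hg).add_right hg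

lemma key_commute {A : Type*} [Ring A] [Algebra R A] (z : R) (a b K : A)
    (hK : Commute b K) (hbr : a * b * a = b * a * b)
    (hqa : a * a = z • a + 1) (hqb : b * b = z • b + 1) :
    Commute a (b * (a * K * a + a) * b + b) := by
  have hbr' : ∀ x : A, a * (b * (a * x)) = b * (a * (b * x)) := fun x => by
    simp only [← mul_assoc]; rw [hbr]
  have hK' : ∀ x : A, b * (K * x) = K * (b * x) := fun x => by
    simp only [← mul_assoc]; rw [hK.eq]
  have hbab : b * (a * b) = a * (b * a) := by
    simp only [← mul_assoc]; rw [hbr]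
  have e1 : a * (b * (a * (K * (a * b)))) = b * (a * (K * (a * (b * a)))) := by
    rw [hbr' (K * (a * b)), hK' (a * b), hbab]
  have h1 : a * (b * (a * b)) = z • (a * (b * a)) + b * a := by
    rw [hbr' b, hqb, mul_add, mul_add, mul_one, mul_smul_comm, mul_smul_comm, hbab]
  have h2 : b * (a * (b * a)) = z • (a * (b * a)) + a * b := by
    rw [← hbr' a, hqa, mul_add, mul_add, mul_one, mul_smul_comm, mul_smul_comm]
  show a * (b * (a * K * a + a) * b + b) = (b * (a * K * a + a) * b + b) * a
  have lhs : a * (b * (a * K * a + a) * b + b)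
      = a * (b * (a * (K * (a * b)))) + (a * (b * (a * b)) + a * b) := by
    noncomm_ring
  have rhs : (b * (a * K * a + a) * b + b) * a
      = b * (a * (K * (a * (b * a)))) + (b * (a * (b * a)) + b * a) := by
    noncomm_ring
  rw [lhs, rhs, e1, h1, h2]
  abel

lemma commute_heckeGen_murphyOp (t : ℕ) :
    ∀ m : ℕ, m ≤ n → t + 3 ≤ m → Commute (heckeGen s n t) (murphyOp s n m) := by
  intro m
  induction m with
  | zero => intro _ h3; omega
  | succ p ih =>
    intro hmn h3
    have hp2 : 2 ≤ p := by omega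
    rw [murphyOp_succ s n (by omega)]
    by_cases hc : t + 3 ≤ p
    · have h1 := ih (by omega) hc
      have h2 : Commute (heckeGen s n t) (heckeGen s n (p - 1)) :=
        heckeGen_comm s n (by omega)
      exact ((h2.mul_right h1).mul_right h2).add_right h2
    · have ht : t = p - 2 := by omega
      obtain ⟨q, rfl⟩ : ∃ q, p = q + 1 := ⟨p - 1, by omega⟩
      have hq1 : 1 ≤ q := by omega
      rw [murphyOp_succ s n hq1]
      simp only [Nat.add_sub_cancel]
      have htq : t = q - 1 := by omega
      rw [htq]
      have hqsub : q - 1 + 1 = q := by omega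
      have hbr := heckeGen_braid s n (a := q - 1) (by omega)
      rw [hqsub] at hbr
      have hqa := heckeGen_quad s n (a := q - 1) (by omega)
      have hqb := heckeGen_quad s n (a := q) (by omega)
      have hK : Commute (heckeGen s n q) (murphyOp s n q) :=
        commute_heckeGen_murphyOp_of_ge s n q q le_rfl
      exact key_commute _ _ _ _ hK hbr hqa hqb

lemma murphy_commute {j k : ℕ} (hjk : j < k) (hkn : k ≤ n) :
    Commute (murphyOp s n j) (murphyOp s n k) := by
  have key : ∀ t : ℕ, t + 3 ≤ k → Commute (heckeGen s n t) (murphyOp s n k) :=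
    fun t ht => commute_heckeGen_murphyOp s n t k hkn ht
  show Commute (∑ i ∈ Finset.Ico 1 j, omegaBraid s n i j) (murphyOp s n k)
  refine Commute.sum_left _ _ _ fun i hi => ?_
  rw [Finset.mem_Ico] at hi
  rw [omegaBraid]
  refine Commute.mul_left (Commute.mul_left ?_ ?_) ?_
  · rw [descProd]
    refine Commute.list_prod_left _ _ fun x hx => ?_
    simp only [List.mem_reverse, List.mem_map, List.mem_range] at hx
    obtain ⟨tt, htt, rfl⟩ := hx
    exact key _ (by omega)
  · exact key _ (by omega)
  · rw [ascProd]
    refine Commute.list_prod_left _ _ fun x hx => ?_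
    simp only [List.mem_map, List.mem_range] at hx
    obtain ⟨tt, htt, rfl⟩ := hx
    exact key _ (by omega)

end Aux

/-- In the Hecke algebra `Hₙ`, the Murphy operators `M(2), …, M(n)` commute
pairwise. -/
theorem murphyOp_mul_comm (s : Rˣ) (n : ℕ) (hn : 1 ≤ n) (j k : ℕ)
    (hj2 : 2 ≤ j) (hjn : j ≤ n) (hk2 : 2 ≤ k) (hkn : k ≤ n) :
    murphyOp s n j * murphyOp s n k = murphyOp s n k * murphyOp s n j := by
  rcases lt_trichotomy j k with h | rfl | h
  · exact (murphy_commute s n h hkn).eq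
  · rfl
  · exact ((murphy_commute s n h hjn).symm).eq
end

section
/- For every m ≥ 1, the power sum ∑_{j=1}^{n} T(j)^m is central in the Hecke algebra Hₙ: it commutes with every element of Hₙ. -/
variable {R : Type*} [CommRing R]

section lemmas
variable (s : Rˣ) (n : ℕ)

lemma heckeGen_of_le {k : ℕ} (h : n - 1 ≤ k) : heckeGen (R := R) s n k = 1 :=
  dif_neg (by omega)

lemma quad_g {k : ℕ} (h : k < n - 1) :
    heckeGen (R := R) s n k * heckeGen s n k
      = ((s : R) - ((s⁻¹ : Rˣ) : R)) • heckeGen s n k + 1 := by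
  rw [heckeGen, dif_pos h, ← map_mul,
    RingQuot.mkAlgHom_rel R (HeckeRel.quad ⟨k, h⟩), map_add, map_smul, map_one]

lemma comm_g {i j : ℕ} (h : i + 2 ≤ j) :
    heckeGen (R := R) s n i * heckeGen s n j = heckeGen s n j * heckeGen s n i := by
  by_cases hj : j < n - 1
  · have hi : i < n - 1 := by omega
    rw [heckeGen, dif_pos hi, heckeGen, dif_pos hj, ← map_mul, ← map_mul,
      RingQuot.mkAlgHom_rel R (HeckeRel.comm ⟨i, hi⟩ ⟨j, hj⟩ h)]
  · rw [heckeGen_of_le s n (by omega : n - 1 ≤ j), mul_one, one_mul]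

lemma braid_g {i : ℕ} (h : i + 1 < n - 1) :
    heckeGen (R := R) s n i * heckeGen s n (i + 1) * heckeGen s n i
      = heckeGen s n (i + 1) * heckeGen s n i * heckeGen s n (i + 1) := by
  have hi : i < n - 1 := by omega
  rw [heckeGen, dif_pos hi, heckeGen, dif_pos h, ← map_mul, ← map_mul, ← map_mul, ← map_mul,
    RingQuot.mkAlgHom_rel R (HeckeRel.braid ⟨i, hi⟩ ⟨i + 1, h⟩ rfl)]

lemma heckeT_list (j : ℕ) :
    heckeT (R := R) s n j
      = (((List.range (j - 1)).map (fun t => heckeGen s n t)).reverse).prod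
        * ((List.range (j - 1)).map (fun t => heckeGen s n t)).prod := by
  simp [heckeT, ascProd, descProd]

lemma heckeT_one : heckeT (R := R) s n 1 = 1 := by
  simp [heckeT, ascProd, descProd]

lemma heckeT_succ (j : ℕ) :
    heckeT (R := R) s n (j + 2)
      = heckeGen s n j * heckeT s n (j + 1) * heckeGen s n j := by
  rw [heckeT_list, heckeT_list]
  have : (j + 2) - 1 = (j + 1 - 1) + 1 := rfl
  rw [this, List.range_succ]
  simp [List.prod_append, mul_assoc]

-- L2: generators with index ≥ j commute with T(j)
lemma commute_g_T_high {j k : ℕ} (h : j ≤ k) :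
    Commute (heckeGen (R := R) s n k) (heckeT s n j) := by
  rw [heckeT_list]
  apply Commute.mul_right <;>
  · apply Commute.list_prod_right
    intro x hx
    simp only [List.mem_reverse, List.mem_map, List.mem_range] at hx
    obtain ⟨t, ht, rfl⟩ := hx
    exact (comm_g s n (by omega : t + 2 ≤ k)).symm

lemma word1 {M : Type*} [Monoid M] (σ τ t : M) (hb : σ * τ * σ = τ * σ * τ)
    (ht : t * τ = τ * t) :
    σ * (τ * (σ * t * σ) * τ) = (τ * (σ * t * σ) * τ) * σ := by
  calc σ * (τ * (σ * t * σ) * τ) = (σ * τ * σ) * (t * (σ * τ)) := by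
        simp only [mul_assoc]
    _ = (τ * σ * τ) * (t * (σ * τ)) := by rw [hb]
    _ = (τ * σ) * (τ * t) * (σ * τ) := by simp only [mul_assoc]
    _ = (τ * σ) * (t * τ) * (σ * τ) := by rw [ht]
    _ = (τ * σ * t) * (τ * σ * τ) := by simp only [mul_assoc]
    _ = (τ * σ * t) * (σ * τ * σ) := by rw [hb]
    _ = (τ * (σ * t * σ) * τ) * σ := by simp only [mul_assoc]

-- L1
lemma commute_g_T_low {k j : ℕ} (h : k + 3 ≤ j) (hjn : j ≤ n) :
    Commute (heckeGen (R := R) s n k) (heckeT s n j) := by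
  induction j, h using Nat.le_induction with
  | base =>
      have e1 : heckeT (R := R) s n (k + 3)
          = heckeGen s n (k + 1) * (heckeGen s n k * heckeT s n (k + 1) * heckeGen s n k)
            * heckeGen s n (k + 1) := by
        rw [show k + 3 = (k + 1) + 2 from rfl, heckeT_succ, heckeT_succ]
      rw [Commute, SemiconjBy, e1]
      exact word1 (heckeGen s n k) (heckeGen s n (k + 1)) (heckeT s n (k + 1))
        (braid_g s n (by omega)) (commute_g_T_high s n (le_refl (k + 1))).symm.eq
  | succ j hj ih =>
      have hj2 : j = (j - 2) + 2 := by omega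
      have e1 : heckeT (R := R) s n (j + 1)
          = heckeGen s n (j - 1) * heckeT s n j * heckeGen s n (j - 1) := by
        rw [show j + 1 = (j - 1) + 2 by omega, heckeT_succ, show j - 1 + 1 = j by omega]
      rw [e1]
      have hc : Commute (heckeGen (R := R) s n k) (heckeGen s n (j - 1)) :=
        comm_g s n (by omega : k + 2 ≤ j - 1)
      exact (hc.mul_right (ih (by omega))).mul_right hc

lemma word2 {M : Type*} [Monoid M] (σ ρ t : M) (hb : ρ * σ * ρ = σ * ρ * σ)
    (h2 : t * σ = σ * t) (h3 : t * (ρ * t * ρ) = (ρ * t * ρ) * t) :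
    (ρ * t * ρ) * (σ * (ρ * t * ρ) * σ) = (σ * (ρ * t * ρ) * σ) * (ρ * t * ρ) := by
  have lhs : (ρ * t * ρ) * (σ * (ρ * t * ρ) * σ)
      = ρ * σ * ρ * t * ρ * t * σ * ρ := by
    calc (ρ * t * ρ) * (σ * (ρ * t * ρ) * σ)
        = ρ * t * (ρ * σ * ρ) * (t * (ρ * σ)) := by simp only [mul_assoc]
      _ = ρ * t * (σ * ρ * σ) * (t * (ρ * σ)) := by rw [hb]
      _ = ρ * (t * σ) * ρ * (σ * t) * (ρ * σ) := by simp only [mul_assoc]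
      _ = ρ * (σ * t) * ρ * (t * σ) * (ρ * σ) := by rw [h2]
      _ = (ρ * σ) * (t * ρ * t) * (σ * ρ * σ) := by simp only [mul_assoc]
      _ = (ρ * σ) * (t * ρ * t) * (ρ * σ * ρ) := by rw [hb]
      _ = (ρ * σ) * (t * (ρ * t * ρ)) * (σ * ρ) := by simp only [mul_assoc]
      _ = (ρ * σ) * ((ρ * t * ρ) * t) * (σ * ρ) := by rw [h3]
      _ = ρ * σ * ρ * t * ρ * t * σ * ρ := by simp only [mul_assoc]
  have rhs : (σ * (ρ * t * ρ) * σ) * (ρ * t * ρ)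
      = ρ * σ * ρ * t * ρ * t * σ * ρ := by
    calc (σ * (ρ * t * ρ) * σ) * (ρ * t * ρ)
        = σ * ρ * t * (ρ * σ * ρ) * (t * ρ) := by simp only [mul_assoc]
      _ = σ * ρ * t * (σ * ρ * σ) * (t * ρ) := by rw [hb]
      _ = σ * ρ * (t * σ) * ρ * (σ * t) * ρ := by simp only [mul_assoc]
      _ = σ * ρ * (σ * t) * ρ * (t * σ) * ρ := by rw [h2]
      _ = (σ * ρ * σ) * (t * ρ * t) * (σ * ρ) := by simp only [mul_assoc]
      _ = (ρ * σ * ρ) * (t * ρ * t) * (σ * ρ) := by rw [← hb]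
      _ = ρ * σ * ρ * t * ρ * t * σ * ρ := by simp only [mul_assoc]
  rw [lhs, rhs]

-- L4
lemma commute_T_T {j : ℕ} (hj : 1 ≤ j) (hjn : j + 1 ≤ n) :
    Commute (heckeT (R := R) s n j) (heckeT s n (j + 1)) := by
  induction j, hj using Nat.le_induction with
  | base => rw [heckeT_one]; exact Commute.one_left _
  | succ j hj ih =>
      have eT : heckeT (R := R) s n (j + 1)
          = heckeGen s n (j - 1) * heckeT s n j * heckeGen s n (j - 1) := by
        rw [show j + 1 = (j - 1) + 2 by omega, heckeT_succ, show j - 1 + 1 = j by omega]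
      have eT2 : heckeT (R := R) s n (j + 2)
          = heckeGen s n j * heckeT s n (j + 1) * heckeGen s n j := heckeT_succ s n j
      rw [Commute, SemiconjBy, eT2, eT]
      exact word2 (heckeGen s n j) (heckeGen s n (j - 1)) (heckeT s n j)
        (by have hbr := braid_g (R := R) s n (i := j - 1) (show j - 1 + 1 < n - 1 by omega)
            rwa [show j - 1 + 1 = j by omega] at hbr)
        (commute_g_T_high s n (le_refl j)).symm.eq
        (by rw [← eT]; exact (ih (by omega)).eq)

end lemmas

section pow
variable {R : Type*} [CommRing R] {A : Type*} [Ring A] [Algebra R A]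

lemma sigma_pow_a (z : R) (σ a b : A) (hq : σ * σ = z • σ + 1) (hb : b = σ * a * σ)
    (m : ℕ) :
    σ * a ^ m = b ^ m * σ - z • (∑ i ∈ Finset.range m, b ^ (i + 1) * a ^ (m - 1 - i)) := by
  have hσa : σ * a = b * σ - z • b := by
    have : b * σ = σ * a * (σ * σ) := by rw [hb]; noncomm_ring
    rw [hq] at this
    rw [this, hb]
    rw [mul_add, mul_one, mul_smul_comm]
    abel
  induction m with
  | zero => simp
  | succ m ih =>
      rw [pow_succ, ← mul_assoc, ih, sub_mul, smul_mul_assoc, Finset.sum_mul]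
      have e1 : b ^ m * σ * a = b ^ (m + 1) * σ - z • (b ^ (m + 1)) := by
        rw [mul_assoc, hσa, mul_sub, mul_smul_comm, ← mul_assoc, ← pow_succ]
      rw [e1, Finset.sum_range_succ]
      have e2 : ∀ i ∈ Finset.range m,
          b ^ (i + 1) * a ^ (m - 1 - i) * a = b ^ (i + 1) * a ^ (m + 1 - 1 - i) := by
        intro i hi
        simp only [Finset.mem_range] at hi
        rw [mul_assoc, ← pow_succ, show m - 1 - i + 1 = m + 1 - 1 - i by omega]
      rw [Finset.sum_congr rfl e2]
      rw [show m + 1 - 1 - m = 0 by omega, pow_zero, mul_one, smul_add]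
      abel

lemma sigma_pow_b (z : R) (σ a b : A) (hq : σ * σ = z • σ + 1) (hb : b = σ * a * σ)
    (m : ℕ) :
    σ * b ^ m = a ^ m * σ + z • (∑ i ∈ Finset.range m, a ^ i * b ^ (m - i)) := by
  have hσb : σ * b = a * σ + z • b := by
    rw [hb, show σ * (σ * a * σ) = (σ * σ) * (a * σ) by noncomm_ring, hq, add_mul,
      one_mul, smul_mul_assoc, mul_assoc]
    abel
  induction m with
  | zero => simp
  | succ m ih =>
      rw [pow_succ, ← mul_assoc, ih, add_mul, smul_mul_assoc, Finset.sum_mul]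
      rw [mul_assoc, hσb, mul_add, mul_smul_comm, ← mul_assoc, ← pow_succ]
      have e2 : ∀ i ∈ Finset.range m,
          a ^ i * b ^ (m - i) * b = a ^ i * b ^ (m + 1 - i) := by
        intro i hi
        simp only [Finset.mem_range] at hi
        rw [mul_assoc, ← pow_succ, show m - i + 1 = m + 1 - i by omega]
      rw [Finset.sum_congr rfl e2, Finset.sum_range_succ,
        show m + 1 - m = 1 by omega, pow_one, smul_add]
      abel

lemma pow_pair (z : R) (σ a b : A) (hq : σ * σ = z • σ + 1) (hb : b = σ * a * σ)
    (hab : Commute a b) (m : ℕ) :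
    σ * (a ^ m + b ^ m) = (a ^ m + b ^ m) * σ := by
  have hXY : (∑ i ∈ Finset.range m, b ^ (i + 1) * a ^ (m - 1 - i))
      = ∑ i ∈ Finset.range m, a ^ i * b ^ (m - i) := by
    rw [← Finset.sum_range_reflect (fun i => a ^ i * b ^ (m - i)) m]
    refine Finset.sum_congr rfl fun i hi => ?_
    simp only [Finset.mem_range] at hi
    rw [show m - (m - 1 - i) = i + 1 by omega, (hab.pow_pow (m - 1 - i) (i + 1)).eq]
  rw [mul_add, sigma_pow_a z σ a b hq hb, sigma_pow_b z σ a b hq hb, hXY, add_mul]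
  abel

end pow

/-- For every `m ≥ 1`, the power sum `∑_{j=1}^{n} T(j)^m` is central in the
Hecke algebra `Hₙ`: it commutes with every element of `Hₙ`. -/
theorem sum_pow_heckeT_central (s : Rˣ) (n : ℕ) (hn : 1 ≤ n) (m : ℕ) (hm : 1 ≤ m)
    (x : Hecke R s n) :
    (∑ j ∈ Finset.Icc 1 n, heckeT s n j ^ m) * x
      = x * ∑ j ∈ Finset.Icc 1 n, heckeT s n j ^ m := by
  have hgen : ∀ k : ℕ, k < n - 1 →
      Commute (heckeGen (R := R) s n k) (∑ j ∈ Finset.Icc 1 n, heckeT s n j ^ m) := by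
    intro k hk
    have hmem1 : k + 1 ∈ Finset.Icc 1 n := by
      simp only [Finset.mem_Icc]; omega
    have hmem2 : k + 2 ∈ (Finset.Icc 1 n).erase (k + 1) := by
      simp only [Finset.mem_erase, Finset.mem_Icc]; omega
    rw [← Finset.add_sum_erase _ _ hmem1, ← Finset.add_sum_erase _ _ hmem2, ← add_assoc]
    apply Commute.add_right
    · show heckeGen (R := R) s n k * _ = _ * heckeGen (R := R) s n k
      exact pow_pair ((s : R) - ((s⁻¹ : Rˣ) : R)) (heckeGen s n k)
        (heckeT s n (k + 1)) (heckeT s n (k + 2)) (quad_g s n hk) (heckeT_succ s n k)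
        (commute_T_T s n (Nat.le_add_left 1 k) (by omega)) m
    · apply Commute.sum_right
      intro j hj
      simp only [Finset.mem_erase, Finset.mem_Icc] at hj
      rcases le_or_gt j k with hle | hgt
      · exact (commute_g_T_high s n hle).pow_right m
      · exact (commute_g_T_low s n (by omega) (by omega)).pow_right m
  have hall : ∀ x : Hecke R s n,
      Commute (∑ j ∈ Finset.Icc 1 n, heckeT s n j ^ m) x := by
    intro x
    obtain ⟨y, rfl⟩ := RingQuot.mkAlgHom_surjective R (HeckeRel R s n) x
    induction y using FreeAlgebra.induction with
    | grade0 r =>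
        rw [AlgHom.commutes]
        exact (Algebra.commutes r _).symm
    | grade1 i =>
        have : RingQuot.mkAlgHom R (HeckeRel R s n) (FreeAlgebra.ι R i)
            = heckeGen s n i.val := by
          rw [heckeGen, dif_pos i.isLt]
        rw [this]
        exact (hgen i.val i.isLt).symm
    | mul a b ha hb =>
        rw [map_mul]
        exact ha.mul_right hb
    | add a b ha hb =>
        rw [map_add]
        exact ha.add_right hb
  exact hall x
end
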